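/- With f(θ) = (1/240)(160 - 60cos θ - 96cos 2θ - 4cos 3θ) and p(θ) = 2 - 2cos θ, the ratio f(θ)/p(θ) extends continuously to θ = 0 with limit 1, equals 2/15 at θ = π, and is monotonically decreasing on [0,π]; in particular 2/15 ≤ f(θ)/p(θ) ≤ 1 for θ ∈ (0,π]. -/

import Mathlib

/-
Both symbols are polynomials in `c = cos θ`, and `p = 2(1 - c)` divides `f`:
`f(θ) = p(θ) · (c² + 13c + 16)/30`. Away from the zeros of `p` the ratio is therefore this
quadratic in `c`, which is increasing for `c ≥ -13/2`, hence on `[-1, 1]`. Composing with the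
decreasing `cos` on `[0, π]` gives the monotonicity, and the values at `c = 1` and `c = -1`
give the limit `1` and the value `2/15`.
-/

open Real

/-- The IgA symbol `f(θ) = (1/240)(160 - 60 cos θ - 96 cos 2θ - 4 cos 3θ)`. -/
noncomputable def fIgA (θ : ℝ) : ℝ :=
  (1 / 240) * (160 - 60 * Real.cos θ - 96 * Real.cos (2 * θ) - 4 * Real.cos (3 * θ))

/-- The preconditioner symbol `p(θ) = 2 - 2 cos θ`. -/
noncomputable def pLap (θ : ℝ) : ℝ := 2 - 2 * Real.cos θ

open Set Filter Topology

noncomputable def ratioInCos (c : ℝ) : ℝ := (c ^ 2 + 13 * c + 16) / 30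

lemma monotoneOn_ratioInCos : MonotoneOn ratioInCos (Ici (-13 / 2)) := by
  intro a ha b hb hab
  rw [mem_Ici] at ha hb
  unfold ratioInCos
  nlinarith

lemma fIgA_eq_pLap_mul (θ : ℝ) : fIgA θ = pLap θ * ratioInCos (cos θ) := by
  unfold fIgA pLap ratioInCos
  rw [cos_two_mul, cos_three_mul]
  ring

lemma fIgA_div_pLap_eqOn :
    EqOn (fun θ => fIgA θ / pLap θ) (ratioInCos ∘ cos) (Ioo (-(2 * π)) (2 * π) \ {0}) := by
  rintro θ ⟨⟨hlo, hhi⟩, hθ⟩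
  have hcos : cos θ ≠ 1 := by rwa [Ne, cos_eq_one_iff_of_lt_of_lt hlo hhi]
  have hp : pLap θ ≠ 0 := by
    unfold pLap
    contrapose! hcos
    linarith
  simp only [Function.comp_apply, fIgA_eq_pLap_mul, mul_div_cancel_left₀ _ hp]

lemma antitoneOn_ratioInCos_comp_cos : AntitoneOn (ratioInCos ∘ cos) (Icc 0 π) :=
  monotoneOn_ratioInCos.comp_AntitoneOn antitoneOn_cos fun θ _ => by
    rw [mem_Ici]
    linarith [neg_one_le_cos θ]

/-- `f/p` tends to `1` at `0`, equals `2/15` at `π`, is monotonically decreasing on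
`(0, π]`, and satisfies `2/15 ≤ f/p ≤ 1` there. -/
theorem fIgA_div_pLap_properties :
    Filter.Tendsto (fun θ => fIgA θ / pLap θ) (nhdsWithin 0 {(0:ℝ)}ᶜ) (nhds 1) ∧
    fIgA π / pLap π = 2 / 15 ∧
    AntitoneOn (fun θ => fIgA θ / pLap θ) (Set.Ioc 0 π) ∧
    ∀ θ ∈ Set.Ioc (0:ℝ) π, 2 / 15 ≤ fIgA θ / pLap θ ∧ fIgA θ / pLap θ ≤ 1 := by
  have hπ : π ∈ Ioc 0 π := ⟨pi_pos, le_rfl⟩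
  have hsub : Ioc 0 π ⊆ Ioo (-(2 * π)) (2 * π) \ {0} := fun θ hθ =>
    ⟨⟨by linarith [pi_pos, hθ.1], by linarith [pi_pos, hθ.2]⟩, hθ.1.ne'⟩
  have hEq : EqOn (fun θ => fIgA θ / pLap θ) (ratioInCos ∘ cos) (Ioc 0 π) :=
    fIgA_div_pLap_eqOn.mono hsub
  have hvalue : fIgA π / pLap π = 2 / 15 :=
    (hEq hπ).trans (by norm_num [ratioInCos])
  have hanti : AntitoneOn (fun θ => fIgA θ / pLap θ) (Ioc 0 π) :=
    (antitoneOn_ratioInCos_comp_cos.mono Ioc_subset_Icc_self).congr hEq.symm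
  refine ⟨?_, hvalue, hanti, fun θ hθ => ⟨hvalue ▸ hanti hθ hπ hθ.2, ?_⟩⟩
  · have hlim : Tendsto (ratioInCos ∘ cos) (𝓝[≠] 0) (𝓝 1) := by
      have hcont : Continuous (ratioInCos ∘ cos) := by unfold ratioInCos; fun_prop
      exact (hcont.tendsto' 0 1 (by norm_num [ratioInCos])).mono_left nhdsWithin_le_nhds
    refine hlim.congr' (Filter.eventuallyEq_of_mem ?_ fIgA_div_pLap_eqOn.symm)
    exact sdiff_mem_nhdsWithin_compl (Ioo_mem_nhds (by linarith [pi_pos]) (by linarith [pi_pos])) _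
  · calc fIgA θ / pLap θ = ratioInCos (cos θ) := hEq hθ
      _ ≤ ratioInCos 1 :=
          monotoneOn_ratioInCos (by rw [mem_Ici]; linarith [neg_one_le_cos θ]) (by norm_num)
            (cos_le_one θ)
      _ = 1 := by norm_num [ratioInCos]
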